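/- arXiv:1712.10275 — 2 statements merged into one kernel-verified Lean document; each statement's English description precedes it below -/
import Mathlib

section
/- Weak duality between the entropy-penalized Mather problem and Evans' minimization: inf_{μ ∈ 𝒞} A_{L,k}(μ) ≥ −(1/k) inf_{φ ∈ C¹(𝕋^{d+1})} log I_k[φ], where A_{L,k}(μ) = ∫ L dμ + (1/k) S[μ] and I_k[φ] = ∫ e^{k(φ_t + H(z,∇φ))}. -/
open MeasureTheory Set

noncomputable section

def pd {n : ℕ} (i : Fin n) (f : (Fin n → ℝ) → ℝ) (z : Fin n → ℝ) : ℝ :=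
  fderiv ℝ f z (Pi.single i 1)

def cube (n : ℕ) : Set (Fin n → ℝ) := Set.Icc 0 1

/-- `ℤ^n`-periodicity -/
def Zper {n : ℕ} (f : (Fin n → ℝ) → ℝ) : Prop :=
  ∀ (z : Fin n → ℝ) (m : Fin n → ℤ), f (z + fun i => (m i : ℝ)) = f z

/-- time derivative `φ_t` (`t` is the last coordinate of `z ∈ 𝕋^{d+1}`) -/
def phit {d : ℕ} (φ : (Fin (d+1) → ℝ) → ℝ) (z : Fin (d+1) → ℝ) : ℝ :=
  pd (Fin.last d) φ z

/-- spatial gradient `∇φ` -/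
def gradsp {d : ℕ} (φ : (Fin (d+1) → ℝ) → ℝ) (z : Fin (d+1) → ℝ) : Fin d → ℝ :=
  fun i => pd i.castSucc φ z

/-!
Fenchel's inequality `L(z,v) ≥ ∇φ·v - H(z,∇φ)`, integrated against a holonomic `μ`, removes the
term `φ_t + ∇φ·v` and leaves `-∫ L dμ ≤ ∫ (φ_t + H(z,∇φ)) ρ dz`. Integrating Young's inequality
`x y ≤ x log x - x + e^y` against the Gibbs density `e^Φ / ∫ e^Φ` gives the Gibbs variational inequality
`∫ Φ ρ ≤ ∫ ρ log ρ + log ∫ e^Φ`, and `Φ = k (φ_t + H(z,∇φ))` concludes. Passing from `μ` to its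
marginal needs `z ↦ H(z,∇φ(z))` continuous: superlinearity of `L` confines the supremum defining `H`
to a ball, locally uniformly in `(z, p)`, and a supremum over a compact set is continuous.
-/

open Filter Topology Real

theorem mul_le_mul_log_sub_add_exp {x : ℝ} (hx : 0 ≤ x) (y : ℝ) :
    x * y ≤ x * log x - x + exp y := by
  rcases hx.eq_or_lt with rfl | hx
  · simpa using (exp_pos y).le
  have h := log_le_sub_one_of_pos (div_pos (exp_pos y) hx)
  rw [log_div (exp_pos y).ne' hx.ne', log_exp, le_sub_iff_add_le, le_div_iff₀ hx] at h
  linarith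

theorem integral_mul_le_integral_mul_log_add_log_integral_exp {α : Type*} [MeasurableSpace α]
    {ν : Measure α} {ρ Φ : α → ℝ} (hρ : 0 ≤ᵐ[ν] ρ) (hρint : Integrable ρ ν)
    (hρ1 : ∫ x, ρ x ∂ν = 1) (hent : Integrable (fun x => ρ x * log (ρ x)) ν)
    (hΦρ : Integrable (fun x => Φ x * ρ x) ν) (hexp : Integrable (fun x => exp (Φ x)) ν) :
    ∫ x, Φ x * ρ x ∂ν ≤ ∫ x, ρ x * log (ρ x) ∂ν + log (∫ x, exp (Φ x) ∂ν) := by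
  have : NeZero ν := ⟨by rintro rfl; simp at hρ1⟩
  set I := ∫ x, exp (Φ x) ∂ν
  have hI : 0 < I := integral_exp_pos hexp
  have hpt : ∀ᵐ x ∂ν, Φ x * ρ x ≤ ρ x * log (ρ x) + ρ x * (log I - 1) + exp (Φ x) / I := by
    filter_upwards [hρ] with x hx
    have h := mul_le_mul_log_sub_add_exp hx (Φ x - log I)
    rw [exp_sub, exp_log hI] at h
    linarith
  have hρ' : Integrable (fun x => ρ x * log (ρ x) + ρ x * (log I - 1)) ν :=
    hent.add (hρint.mul_const _)
  have hrhs : Integrable (fun x => ρ x * log (ρ x) + ρ x * (log I - 1) + exp (Φ x) / I) ν :=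
    hρ'.add (hexp.div_const _)
  calc ∫ x, Φ x * ρ x ∂ν
      ≤ ∫ x, ρ x * log (ρ x) + ρ x * (log I - 1) + exp (Φ x) / I ∂ν := integral_mono_ae hΦρ hrhs hpt
    _ = ∫ x, ρ x * log (ρ x) ∂ν + log I := by
      rw [integral_add hρ' (hexp.div_const _),
        integral_add hent (hρint.mul_const _), integral_mul_const, integral_div, hρ1,
        div_self hI.ne']
      ring

theorem abs_sum_mul_le_sum_abs_mul_norm {d : ℕ} (q v : Fin d → ℝ) :
    |∑ i, q i * v i| ≤ (∑ i, |q i|) * ‖v‖ := by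
  calc |∑ i, q i * v i| ≤ ∑ i, |q i| * |v i| := by
        simpa only [abs_mul] using Finset.abs_sum_le_sum_abs (fun i => q i * v i) Finset.univ
    _ ≤ ∑ i, |q i| * ‖v‖ := by
        gcongr with i
        exact norm_le_pi_norm v i
    _ = (∑ i, |q i|) * ‖v‖ := (Finset.sum_mul ..).symm

theorem IsCompact.bddAbove_range_and_sSup_range_eq {E : Type*} [TopologicalSpace E] {g : E → ℝ}
    {K : Set E} (hK : IsCompact K) (hg : ContinuousOn g K) {x₀ : E} (hx₀ : x₀ ∈ K)
    (hout : ∀ v ∉ K, g v ≤ g x₀) :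
    BddAbove (range g) ∧ sSup (range g) = sSup (g '' K) := by
  have hbdd : BddAbove (g '' K) := hK.bddAbove_image hg
  have hle : ∀ v, g v ≤ sSup (g '' K) := fun v => by
    by_cases hv : v ∈ K
    · exact le_csSup hbdd (mem_image_of_mem g hv)
    · exact (hout v hv).trans (le_csSup hbdd (mem_image_of_mem g hx₀))
  refine ⟨⟨_, forall_mem_range.2 hle⟩, le_antisymm (csSup_le ⟨g x₀, mem_range_self x₀⟩ ?_) ?_⟩
  · exact forall_mem_range.2 hle
  · exact csSup_le_csSup ⟨_, forall_mem_range.2 hle⟩ ⟨g x₀, mem_image_of_mem g hx₀⟩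
      (image_subset_range g K)

section Legendre

variable {Z : Type*} [TopologicalSpace Z] {d : ℕ} {L : Z → (Fin d → ℝ) → ℝ}

def legendre (L : Z → (Fin d → ℝ) → ℝ) (z : Z) (q : Fin d → ℝ) : ℝ :=
  sSup (range fun v => ∑ i, q i * v i - L z v)

variable (hL : Continuous fun x : Z × (Fin d → ℝ) => L x.1 x.2)
  (hsuper : ∀ C : ℝ, ∃ R : ℝ, ∀ z v, R ≤ ‖v‖ → C * ‖v‖ ≤ L z v)
include hL hsuper

theorem exists_eventually_sum_mul_sub_le_of_norm_gt (z₀ : Z) (q₀ : Fin d → ℝ) :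
    ∃ R, 0 ≤ R ∧ ∀ᶠ x : Z × (Fin d → ℝ) in 𝓝 (z₀, q₀),
      ∀ v, R < ‖v‖ → ∑ i, x.2 i * v i - L x.1 v ≤ -L x.1 0 := by
  set c := ∑ i, |q₀ i| + 1
  obtain ⟨R₀, hR₀⟩ := hsuper (c + 1)
  have hq : ∀ᶠ x : Z × (Fin d → ℝ) in 𝓝 (z₀, q₀), ∑ i, |x.2 i| < c :=
    (continuous_finsetSum _ fun i _ => ((continuous_apply i).comp continuous_snd).abs)
      |>.continuousAt.eventually_lt continuousAt_const (lt_add_one _)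
  have hL0 : ∀ᶠ x : Z × (Fin d → ℝ) in 𝓝 (z₀, q₀), L x.1 0 < L z₀ 0 + 1 :=
    (hL.comp (continuous_fst.prodMk continuous_const)).continuousAt.eventually_lt
      continuousAt_const (lt_add_one _)
  refine ⟨max (max R₀ (L z₀ 0 + 1)) 0, le_max_right _ _, ?_⟩
  filter_upwards [hq, hL0] with x hxq hxL v hv
  have hvR₀ : R₀ ≤ ‖v‖ := by grind
  have hvL : L z₀ 0 + 1 < ‖v‖ := by grind
  have hpair := (le_abs_self _).trans (abs_sum_mul_le_sum_abs_mul_norm x.2 v)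
  have hsup := hR₀ x.1 v hvR₀
  nlinarith [norm_nonneg v]

theorem exists_eventually_legendre_eq_sSup_closedBall (z₀ : Z) (q₀ : Fin d → ℝ) :
    ∃ R, ∀ᶠ x : Z × (Fin d → ℝ) in 𝓝 (z₀, q₀),
      BddAbove (range fun v => ∑ i, x.2 i * v i - L x.1 v) ∧
      legendre L x.1 x.2 =
        sSup ((fun v => ∑ i, x.2 i * v i - L x.1 v) '' Metric.closedBall 0 R) := by
  obtain ⟨R, hR, hev⟩ := exists_eventually_sum_mul_sub_le_of_norm_gt hL hsuper z₀ q₀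
  refine ⟨R, hev.mono fun x hx => ?_⟩
  refine (isCompact_closedBall 0 R).bddAbove_range_and_sSup_range_eq ?_
    (Metric.mem_closedBall_self hR) fun v hv => ?_
  · exact (continuous_finsetSum _ fun i _ => continuous_const.mul (continuous_apply i)).sub
      (hL.comp (continuous_const.prodMk continuous_id)) |>.continuousOn
  · simpa using hx v (by simpa using hv)

theorem bddAbove_range_sum_mul_sub (z : Z) (q : Fin d → ℝ) :
    BddAbove (range fun v => ∑ i, q i * v i - L z v) :=
  (exists_eventually_legendre_eq_sSup_closedBall hL hsuper z q).choose_spec.self_of_nhds.1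

theorem sum_mul_sub_le_legendre (z : Z) (q v : Fin d → ℝ) :
    ∑ i, q i * v i - L z v ≤ legendre L z q :=
  le_csSup (bddAbove_range_sum_mul_sub hL hsuper z q) ⟨v, rfl⟩

theorem continuous_legendre : Continuous fun x : Z × (Fin d → ℝ) => legendre L x.1 x.2 := by
  refine continuous_iff_continuousAt.2 fun ⟨z₀, q₀⟩ => ?_
  obtain ⟨R, hev⟩ := exists_eventually_legendre_eq_sSup_closedBall hL hsuper z₀ q₀
  have hcont : Continuous fun x : Z × (Fin d → ℝ) =>
      sSup ((fun v => ∑ i, x.2 i * v i - L x.1 v) '' Metric.closedBall 0 R) :=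
    (isCompact_closedBall 0 R).continuous_sSup <|
      (continuous_finsetSum _ fun i _ => ((continuous_apply i).comp continuous_fst.snd).mul
        ((continuous_apply i).comp continuous_snd)).sub
      (hL.comp (continuous_fst.fst.prodMk continuous_snd))
  exact hcont.continuousAt.congr (hev.mono fun x hx => hx.2.symm)

theorem neg_integral_le_integral_legendre [MeasurableSpace Z] {μ : Measure (Z × (Fin d → ℝ))}
    {a : Z → ℝ} {p : Z → Fin d → ℝ}
    (hholo : ∫ x, (a x.1 + ∑ i, p x.1 i * x.2 i) ∂μ = 0)
    (hholoInt : Integrable (fun x => a x.1 + ∑ i, p x.1 i * x.2 i) μ)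
    (hψ : Integrable (fun x => a x.1 + legendre L x.1 (p x.1)) μ)
    (hLint : Integrable (fun x => L x.1 x.2) μ) :
    -∫ x, L x.1 x.2 ∂μ ≤ ∫ x, (a x.1 + legendre L x.1 (p x.1)) ∂μ :=
  calc -∫ x, L x.1 x.2 ∂μ = ∫ x, (a x.1 + ∑ i, p x.1 i * x.2 i - L x.1 x.2) ∂μ := by
        rw [integral_sub hholoInt hLint, hholo, zero_sub]
    _ ≤ ∫ x, (a x.1 + legendre L x.1 (p x.1)) ∂μ :=
        integral_mono (hholoInt.sub hLint) hψ fun x => by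
          linarith [sum_mul_sub_le_legendre hL hsuper x.1 (p x.1) x.2]

end Legendre

section Integrability

variable {X : Type*} [TopologicalSpace X] [MeasurableSpace X] [OpensMeasurableSpace X]
  {K : Set X}

theorem integrable_comp_of_ae_mem_compact {α : Type*} [MeasurableSpace α] {μ : Measure α}
    [IsFiniteMeasure μ] {f : α → X} (hf : Measurable f) (hK : IsCompact K)
    (hfK : ∀ᵐ a ∂μ, f a ∈ K) {g : X → ℝ} (hg : Continuous g) :
    Integrable (fun a => g (f a)) μ := by
  obtain ⟨C, hC⟩ := hK.exists_bound_of_continuousOn hg.continuousOn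
  exact .of_bound (hg.measurable.comp hf).aestronglyMeasurable C (hfK.mono fun a ha => hC _ ha)

theorem integrable_sum_mul_of_ae_mem_compact {d : ℕ} {μ : Measure (X × (Fin d → ℝ))}
    (hK : IsCompact K) (hμK : ∀ᵐ x ∂μ, x.1 ∈ K) (hmom : Integrable (fun x => ‖x.2‖) μ)
    {p : X → Fin d → ℝ} (hp : Continuous p) :
    Integrable (fun x => ∑ i, p x.1 i * x.2 i) μ := by
  have hpc : Continuous fun z => ∑ i, |p z i| :=
    continuous_finsetSum _ fun i _ => ((continuous_apply i).comp hp).abs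
  obtain ⟨B, hB⟩ := hK.exists_bound_of_continuousOn hpc.continuousOn
  refine (hmom.const_mul B).mono' (by fun_prop) (hμK.mono fun x hx => ?_)
  calc ‖∑ i, p x.1 i * x.2 i‖ ≤ (∑ i, |p x.1 i|) * ‖x.2‖ := abs_sum_mul_le_sum_abs_mul_norm _ _
    _ ≤ B * ‖x.2‖ := by
        gcongr
        exact (le_abs_self _).trans (hB x.1 hx)

end Integrability

theorem stmt_13_general (d k : ℕ) (hk : 0 < k)
    (L : (Fin (d+1) → ℝ) → (Fin d → ℝ) → ℝ)
    (hL : ContDiff ℝ 2 (fun q : (Fin (d+1) → ℝ) × (Fin d → ℝ) => L q.1 q.2))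
    (hLsuper : ∀ C : ℝ, ∃ R : ℝ, ∀ z v, R ≤ ‖v‖ → C * ‖v‖ ≤ L z v)
    (H : (Fin (d+1) → ℝ) → (Fin d → ℝ) → ℝ)
    (hH : ∀ z p, H z p = sSup {y : ℝ | ∃ v : Fin d → ℝ, y = (∑ i, p i * v i) - L z v})
    (μ : Measure ((Fin (d+1) → ℝ) × (Fin d → ℝ)))
    (hprob : IsProbabilityMeasure μ)
    (hsupp : μ ((cube (d+1) ×ˢ (Set.univ : Set (Fin d → ℝ)))ᶜ) = 0)
    (hmom : Integrable (fun zv : (Fin (d+1) → ℝ) × (Fin d → ℝ) => ‖zv.2‖) μ)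
    (hholo : ∀ φ : (Fin (d+1) → ℝ) → ℝ, ContDiff ℝ 1 φ → Zper φ →
      ∫ zv : (Fin (d+1) → ℝ) × (Fin d → ℝ),
        (phit φ zv.1 + ∑ i, gradsp φ zv.1 i * zv.2 i) ∂μ = 0)
    (ρ : (Fin (d+1) → ℝ) → ℝ) (hρnn : ∀ z, 0 ≤ ρ z)
    (hmarg : ∀ g : (Fin (d+1) → ℝ) → ℝ, Continuous g →
      ∫ zv : (Fin (d+1) → ℝ) × (Fin d → ℝ), g zv.1 ∂μ =
        ∫ z in cube (d+1), g z * ρ z)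
    (hLint : Integrable (fun zv : (Fin (d+1) → ℝ) × (Fin d → ℝ) => L zv.1 zv.2) μ)
    (hent : IntegrableOn (fun z => ρ z * Real.log (ρ z)) (cube (d+1))) :
    ∀ φ : (Fin (d+1) → ℝ) → ℝ, ContDiff ℝ 1 φ → Zper φ →
      -((k : ℝ)⁻¹ * Real.log (∫ z in cube (d+1),
          Real.exp ((k : ℝ) * (phit φ z + H z (gradsp φ z))))) ≤
      (∫ zv : (Fin (d+1) → ℝ) × (Fin d → ℝ), L zv.1 zv.2 ∂μ)
        + (k : ℝ)⁻¹ * ∫ z in cube (d+1), ρ z * Real.log (ρ z) := by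
  intro φ hφ hper
  have hH' : H = legendre L := funext₂ fun z q => by
    rw [hH, legendre]
    simp only [range, eq_comm]
  have hpd (i : Fin (d+1)) : Continuous (pd i φ) :=
    (hφ.continuous_fderiv one_ne_zero).clm_apply continuous_const
  have hp : Continuous (gradsp φ) := continuous_pi fun i => hpd _
  have hψ : Continuous fun z => phit φ z + H z (gradsp φ z) := (hpd _).add <| by
    rw [hH']; exact (continuous_legendre hL.continuous hLsuper).comp (continuous_id.prodMk hp)
  have hcube : IsCompact (cube (d+1)) := isCompact_Icc
  have hμK : ∀ᵐ x ∂μ, x.1 ∈ cube (d+1) := (ae_iff.2 hsupp).mono fun x hx => hx.1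
  have hdual := neg_integral_le_integral_legendre hL.continuous hLsuper (hholo φ hφ hper)
    ((integrable_comp_of_ae_mem_compact measurable_fst hcube hμK (hpd _)).add
      (integrable_sum_mul_of_ae_mem_compact hcube hμK hmom hp))
    (hH' ▸ integrable_comp_of_ae_mem_compact measurable_fst hcube hμK hψ) hLint
  rw [← hH', hmarg _ hψ] at hdual
  have hρ1 : ∫ z in cube (d+1), ρ z = 1 := by simpa using (hmarg 1 continuous_const).symm
  have hρint : IntegrableOn ρ (cube (d+1)) := .of_integral_ne_zero (hρ1 ▸ one_ne_zero)
  have hΦ : Continuous fun z => (k : ℝ) * (phit φ z + H z (gradsp φ z)) := continuous_const.mul hψ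
  have hgibbs := integral_mul_le_integral_mul_log_add_log_integral_exp (ae_of_all _ hρnn)
    hρint hρ1 hent (hρint.continuousOn_mul hΦ.continuousOn hcube)
    (hΦ.rexp.continuousOn.integrableOn_compact hcube)
  simp only [mul_assoc, integral_const_mul] at hgibbs
  have hk' : (0 : ℝ) < k := by exact_mod_cast hk
  field_simp
  linarith [mul_le_mul_of_nonneg_left hdual hk'.le]

/-- Weak duality between the entropy-penalized Mather problem and Evans'
minimization: for every holonomic probability measure `μ` on `𝕋^{d+1} × ℝ^d`
with finite first moment, marginal density `ρ` on `𝕋^{d+1}`, and every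
`φ ∈ C¹(𝕋^{d+1})`,
`∫ L dμ + (1/k)∫ ρ log ρ ≥ -(1/k) log I_k[φ]`;
hence `inf_μ A_{L,k}(μ) ≥ -(1/k) inf_φ log I_k[φ]`. -/
theorem stmt_13 (d k : ℕ) (hk : 0 < k)
    (L : (Fin (d+1) → ℝ) → (Fin d → ℝ) → ℝ)
    (hL : ContDiff ℝ 2 (fun q : (Fin (d+1) → ℝ) × (Fin d → ℝ) => L q.1 q.2))
    (hLper : ∀ z p (m : Fin (d+1) → ℤ), L (z + fun i => (m i : ℝ)) p = L z p)
    (hLconv : ∀ z, StrictConvexOn ℝ Set.univ (L z))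
    (hLsuper : ∀ C : ℝ, ∃ R : ℝ, ∀ z v, R ≤ ‖v‖ → C * ‖v‖ ≤ L z v)
    (H : (Fin (d+1) → ℝ) → (Fin d → ℝ) → ℝ)
    (hH : ∀ z p, H z p = sSup {y : ℝ | ∃ v : Fin d → ℝ, y = (∑ i, p i * v i) - L z v})
    (μ : Measure ((Fin (d+1) → ℝ) × (Fin d → ℝ)))
    (hprob : IsProbabilityMeasure μ)
    (hsupp : μ ((cube (d+1) ×ˢ (Set.univ : Set (Fin d → ℝ)))ᶜ) = 0)
    (hmom : Integrable (fun zv : (Fin (d+1) → ℝ) × (Fin d → ℝ) => ‖zv.2‖) μ)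
    (hholo : ∀ φ : (Fin (d+1) → ℝ) → ℝ, ContDiff ℝ 1 φ → Zper φ →
      ∫ zv : (Fin (d+1) → ℝ) × (Fin d → ℝ),
        (phit φ zv.1 + ∑ i, gradsp φ zv.1 i * zv.2 i) ∂μ = 0)
    (ρ : (Fin (d+1) → ℝ) → ℝ) (hρnn : ∀ z, 0 ≤ ρ z)
    (hmarg : ∀ g : (Fin (d+1) → ℝ) → ℝ, Continuous g →
      ∫ zv : (Fin (d+1) → ℝ) × (Fin d → ℝ), g zv.1 ∂μ =
        ∫ z in cube (d+1), g z * ρ z)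
    (hLint : Integrable (fun zv : (Fin (d+1) → ℝ) × (Fin d → ℝ) => L zv.1 zv.2) μ)
    (hent : IntegrableOn (fun z => ρ z * Real.log (ρ z)) (cube (d+1))) :
    ∀ φ : (Fin (d+1) → ℝ) → ℝ, ContDiff ℝ 1 φ → Zper φ →
      -((k : ℝ)⁻¹ * Real.log (∫ z in cube (d+1),
          Real.exp ((k : ℝ) * (phit φ z + H z (gradsp φ z))))) ≤
      (∫ zv : (Fin (d+1) → ℝ) × (Fin d → ℝ), L zv.1 zv.2 ∂μ)
        + (k : ℝ)⁻¹ * ∫ z in cube (d+1), ρ z * Real.log (ρ z) :=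
  stmt_13_general d k hk L hL hLsuper H hH μ hprob hsupp hmom hholo ρ hρnn hmarg hLint hent
end
end

section
/- If (u_k, m_k) solves the mean field game system u_t + H(x,t,∇u) = (1/k)log m + H̄_k, m_t + div(H_p m) = 0, ∫u = 0, ∫m = 1, then the measure μ_k(z,v) = δ(v − H_p(z,∇u_k(z))) m_k(z) belongs to the constraint set 𝒞 and minimizes A_{L,k} over 𝒞, with A_{L,k}(μ_k) = −(1/k) log I_k[u_k] = −H̄_k. -/
open MeasureTheory Set

noncomputable section

/-- `H_p(z, ∇u(z))` -/
def Hpu {d : ℕ} (H : (Fin (d+1) → ℝ) → (Fin d → ℝ) → ℝ)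
    (u : (Fin (d+1) → ℝ) → ℝ) (z : Fin (d+1) → ℝ) : Fin d → ℝ :=
  fun i => fderiv ℝ (H z) (gradsp u z) (Pi.single i 1)

/-- the Mather-type measure `μ_k = δ(v - H_p(z,∇u_k)) m_k(z)` -/
def muk {d : ℕ} (H : (Fin (d+1) → ℝ) → (Fin d → ℝ) → ℝ)
    (u m : (Fin (d+1) → ℝ) → ℝ) :
    Measure ((Fin (d+1) → ℝ) × (Fin d → ℝ)) :=
  ((volume.restrict (cube (d+1))).withDensity fun z => ENNReal.ofReal (m z)).map
    fun z => (z, Hpu H u z)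

/-- membership in the holonomic constraint set `𝒞`, with marginal density `ρ`,
together with the integrability used to define `A_{L,k}` -/
def memC {d : ℕ} (L : (Fin (d+1) → ℝ) → (Fin d → ℝ) → ℝ)
    (ν : Measure ((Fin (d+1) → ℝ) × (Fin d → ℝ)))
    (ρ : (Fin (d+1) → ℝ) → ℝ) : Prop :=
  IsProbabilityMeasure ν ∧
  ν ((cube (d+1) ×ˢ (Set.univ : Set (Fin d → ℝ)))ᶜ) = 0 ∧
  Integrable (fun zv : (Fin (d+1) → ℝ) × (Fin d → ℝ) => ‖zv.2‖) ν ∧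
  (∀ φ : (Fin (d+1) → ℝ) → ℝ, ContDiff ℝ 1 φ → Zper φ →
    ∫ zv : (Fin (d+1) → ℝ) × (Fin d → ℝ),
      (phit φ zv.1 + ∑ i, gradsp φ zv.1 i * zv.2 i) ∂ν = 0) ∧
  (∀ z, 0 ≤ ρ z) ∧
  (∀ g : (Fin (d+1) → ℝ) → ℝ, Continuous g →
    ∫ zv : (Fin (d+1) → ℝ) × (Fin d → ℝ), g zv.1 ∂ν =
      ∫ z in cube (d+1), g z * ρ z) ∧
  Integrable (fun zv : (Fin (d+1) → ℝ) × (Fin d → ℝ) => L zv.1 zv.2) ν ∧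
  IntegrableOn (fun z => ρ z * Real.log (ρ z)) (cube (d+1))

lemma clm_apply_pi {dd : ℕ} (ℓ : (Fin dd → ℝ) →L[ℝ] ℝ) (w : Fin dd → ℝ) :
    ℓ w = ∑ i, w i * ℓ (Pi.single i 1) := by
  have hw : w = ∑ i, w i • (Pi.single i 1 : Fin dd → ℝ) := by
    rw [pi_eq_sum_univ w]
    congr 1
    ext i j
    simp [Pi.single_apply, eq_comm]
  conv_lhs => rw [hw]
  rw [map_sum]
  simp [smul_eq_mul]

lemma abs_sum_mul_le {dd : ℕ} (p v : Fin dd → ℝ) :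
    |∑ i, p i * v i| ≤ dd * ‖p‖ * ‖v‖ := by
  calc |∑ i, p i * v i| ≤ ∑ i, |p i * v i| := Finset.abs_sum_le_sum_abs _ _
    _ ≤ ∑ _i : Fin dd, ‖p‖ * ‖v‖ := by
        refine Finset.sum_le_sum fun i _ => ?_
        rw [abs_mul]
        exact mul_le_mul (norm_le_pi_norm p i) (norm_le_pi_norm v i)
          (abs_nonneg _) (norm_nonneg _)
    _ = dd * ‖p‖ * ‖v‖ := by simp [mul_assoc]

lemma pd_continuous {n : ℕ} {f : (Fin n → ℝ) → ℝ} (hf : ContDiff ℝ 1 f) (j : Fin n) :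
    Continuous (pd j f) := by
  have h := (hf.continuous_fderiv one_ne_zero)
  exact h.clm_apply continuous_const

lemma pd_mul {n : ℕ} {f g : (Fin n → ℝ) → ℝ} {z : Fin n → ℝ}
    (hf : DifferentiableAt ℝ f z) (hg : DifferentiableAt ℝ g z) (j : Fin n) :
    pd j (fun w => f w * g w) z = pd j f z * g z + f z * pd j g z := by
  unfold pd
  rw [fderiv_fun_mul hf hg]
  simp only [ContinuousLinearMap.add_apply, ContinuousLinearMap.smul_apply, smul_eq_mul]
  ring

lemma Zper.mul {n : ℕ} {f g : (Fin n → ℝ) → ℝ} (hf : Zper f) (hg : Zper g) :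
    Zper (fun z => f z * g z) := fun z m => by simp only []; rw [hf z m, hg z m]

lemma Zper.pdper {n : ℕ} {f : (Fin n → ℝ) → ℝ} (hf : Differentiable ℝ f)
    (hper : Zper f) (j : Fin n) : Zper (pd j f) := by
  intro z c
  have hT : HasFDerivAt (fun w : Fin n → ℝ => w + fun i => ((c i : ℝ)))
      (ContinuousLinearMap.id ℝ (Fin n → ℝ)) z := (hasFDerivAt_id z).add_const _
  have hcomp : HasFDerivAt (fun w : Fin n → ℝ => f (w + fun i => ((c i : ℝ))))
      ((fderiv ℝ f (z + fun i => ((c i : ℝ)))).comp (ContinuousLinearMap.id ℝ _)) z :=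
    (hf _).hasFDerivAt.comp z hT
  have heq : (fun w : Fin n → ℝ => f (w + fun i => ((c i : ℝ)))) = f := by
    funext w; exact hper w c
  rw [heq] at hcomp
  have : fderiv ℝ f z = (fderiv ℝ f (z + fun i => ((c i : ℝ)))).comp
      (ContinuousLinearMap.id ℝ _) := hcomp.fderiv.symm ▸ rfl
  unfold pd
  rw [hcomp.fderiv]
  simp

abbrev ins {n : ℕ} (i : Fin (n+1)) (x : ℝ) (y : Fin n → ℝ) : Fin (n+1) → ℝ :=
  Fin.insertNth (α := fun _ => ℝ) i x y

lemma insertNth_x_eq {n : ℕ} (i : Fin (n+1)) (y : Fin n → ℝ) (x : ℝ) :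
    ins i x y = ins i 0 y + x • (Pi.single i 1 : Fin (n+1) → ℝ) := by
  funext j
  rcases eq_or_ne j i with rfl | hji
  · simp [ins]
  · rcases Fin.exists_succAbove_eq hji with ⟨l, rfl⟩
    simp [ins, Pi.single_eq_of_ne (Fin.succAbove_ne i l)]

lemma insertNth_one_eq {n : ℕ} (i : Fin (n+1)) (y : Fin n → ℝ) :
    ins i 1 y = ins i 0 y + Pi.single i 1 := by
  rw [insertNth_x_eq]; simp

lemma hasDerivAt_insertNth {n : ℕ} {f : (Fin (n+1) → ℝ) → ℝ} (hf : ContDiff ℝ 1 f)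
    (i : Fin (n+1)) (y : Fin n → ℝ) (x : ℝ) :
    HasDerivAt (fun t => f (ins i t y)) (pd i f (ins i x y)) x := by
  have hc : HasDerivAt (fun t : ℝ => ins i 0 y + t • (Pi.single i 1 : Fin (n+1) → ℝ))
      (Pi.single i 1 : Fin (n+1) → ℝ) x := by
    simpa using ((hasDerivAt_id x).smul_const (Pi.single i 1 : Fin (n+1) → ℝ)).const_add
      (ins i 0 y)
  have hc' : HasDerivAt (fun t : ℝ => ins i t y)
      (Pi.single i 1 : Fin (n+1) → ℝ) x := by
    have : (fun t : ℝ => ins i t y)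
        = fun t : ℝ => ins i 0 y + t • (Pi.single i 1 : Fin (n+1) → ℝ) := by
      funext t; exact insertNth_x_eq i y t
    rw [this]; exact hc
  have hF : HasFDerivAt f (fderiv ℝ f (ins i x y)) (ins i x y) :=
    (hf.differentiable one_ne_zero _).hasFDerivAt
  exact hF.comp_hasDerivAt x hc'

lemma integral_pd {n : ℕ} {f : (Fin (n+1) → ℝ) → ℝ} (hf : ContDiff ℝ 1 f)
    (hper : Zper f) (i : Fin (n+1)) : ∫ z in cube (n+1), pd i f z = 0 := by
  classical
  have hcont : Continuous (pd i f) := pd_continuous hf i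
  set h : (Fin (n+1) → ℝ) → ℝ := (cube (n+1)).indicator (pd i f) with hh
  have hmeas : MeasurableSet (cube (n+1)) := measurableSet_Icc
  have hIntOn : IntegrableOn (pd i f) (cube (n+1)) :=
    hcont.continuousOn.integrableOn_compact isCompact_Icc
  have hInth : Integrable h := (integrable_indicator_iff hmeas).2 hIntOn
  have h1 : ∫ z in cube (n+1), pd i f z = ∫ z, h z := (integral_indicator hmeas).symm
  rw [h1]
  have cont_ins : ∀ y : Fin n → ℝ, Continuous fun x : ℝ => ins i x y := by
    intro y
    have : (fun x : ℝ => ins i x y)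
        = fun x : ℝ => ins i 0 y + x • (Pi.single i 1 : Fin (n+1) → ℝ) := by
      funext x; exact insertNth_x_eq i y x
    rw [this]
    exact continuous_const.add (continuous_id.smul continuous_const)
  set e := MeasurableEquiv.piFinSuccAbove (fun _ : Fin (n+1) => ℝ) i with he
  have hMP : MeasurePreserving e (Measure.pi fun _ => volume)
      ((volume : Measure ℝ).prod (Measure.pi fun _ : Fin n => volume)) :=
    measurePreserving_piFinSuccAbove (fun _ => volume) i
  set g : ℝ × (Fin n → ℝ) → ℝ := fun q => h (ins i q.1 q.2) with hg
  have hge : ∀ z, g (e z) = h z := by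
    intro z
    simp only [hg, he, MeasurableEquiv.piFinSuccAbove_apply]
    congr 1
    exact Fin.insertNth_self_removeNth _ _
  have h2 : ∫ z, h z = ∫ q, g q ∂((volume : Measure ℝ).prod (Measure.pi fun _ : Fin n => volume)) := by
    conv_lhs => rw [show (volume : Measure (Fin (n+1) → ℝ)) = Measure.pi fun _ => volume from volume_pi]
    rw [← hMP.integral_comp e.measurableEmbedding g]
    exact integral_congr_ae (Filter.Eventually.of_forall fun z => (hge z).symm)
  rw [h2]
  have hIntg : Integrable g ((volume : Measure ℝ).prod (Measure.pi fun _ : Fin n => volume)) := by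
    rw [← hMP.integrable_comp_emb e.measurableEmbedding]
    have : (g ∘ e) = h := funext hge
    rw [this]
    rwa [show (Measure.pi fun _ : Fin (n+1) => (volume : Measure ℝ)) = volume from volume_pi]
  rw [integral_prod_symm g hIntg]
  -- now compute inner integral for each y
  have hinner : ∀ y : Fin n → ℝ, (∫ x : ℝ, g (x, y)) = 0 := by
    intro y
    by_cases hy : y ∈ Set.Icc (0 : Fin n → ℝ) 1
    · have hgy : (fun x : ℝ => g (x, y))
          = (Set.Icc (0:ℝ) 1).indicator (fun x => pd i f (ins i x y)) := by
        funext x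
        simp only [hg, hh, indicator]
        have hmem : ins i x y ∈ cube (n+1) ↔ x ∈ Set.Icc (0:ℝ) 1 := by
          rw [cube, show (Set.Icc (0 : Fin (n+1) → ℝ) 1) = Set.Icc (0 : Fin (n+1) → ℝ) 1 from rfl]
          rw [Fin.insertNth_mem_Icc]
          simp only [Pi.zero_apply, Pi.one_apply]
          constructor
          · rintro ⟨hx, _⟩; exact hx
          · intro hx
            refine ⟨hx, ?_⟩
            exact ⟨fun j => hy.1 j, fun j => hy.2 j⟩
        by_cases hx : x ∈ Set.Icc (0:ℝ) 1
        · rw [if_pos (hmem.2 hx), if_pos hx]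
        · rw [if_neg (fun hc => hx (hmem.1 hc)), if_neg hx]
      rw [hgy, integral_indicator measurableSet_Icc]
      have hicc : ∫ x in Set.Icc (0:ℝ) 1, pd i f (ins i x y)
          = ∫ x in (0:ℝ)..1, pd i f (ins i x y) := by
        rw [integral_Icc_eq_integral_Ioc, intervalIntegral.integral_of_le zero_le_one]
      rw [hicc]
      have hftc : ∫ x in (0:ℝ)..1, pd i f (ins i x y)
          = f (ins i 1 y) - f (ins i 0 y) := by
        refine intervalIntegral.integral_eq_sub_of_hasDerivAt
          (fun x _ => hasDerivAt_insertNth hf i y x) ?_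
        exact (hcont.comp (cont_ins y)).intervalIntegrable 0 1
      rw [hftc, insertNth_one_eq]
      have : (Pi.single i 1 : Fin (n+1) → ℝ) = fun j => ((Pi.single i 1 : Fin (n+1) → ℤ) j : ℝ) := by
        funext j
        rcases eq_or_ne j i with rfl | hji
        · simp
        · simp [Pi.single_eq_of_ne hji]
      rw [this, hper (ins i 0 y) (Pi.single i 1), sub_self]
    · have hgy : (fun x : ℝ => g (x, y)) = fun _ => (0:ℝ) := by
        funext x
        simp only [hg, hh]
        rw [indicator_of_notMem]
        intro hc
        rw [cube] at hc
        rw [Fin.insertNth_mem_Icc] at hc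
        exact hy ⟨fun j => hc.2.1 j, fun j => hc.2.2 j⟩
      rw [hgy, integral_zero]
  calc (∫ y, ∫ x, g (x, y) ∂(volume : Measure ℝ) ∂(Measure.pi fun _ : Fin n => volume))
      = ∫ y, (0:ℝ) ∂(Measure.pi fun _ : Fin n => volume) := by
        exact integral_congr_ae (Filter.Eventually.of_forall fun y => hinner y)
    _ = 0 := integral_zero _ _

section Ham
variable {d : ℕ} {H : (Fin (d+1) → ℝ) → (Fin d → ℝ) → ℝ}
  {u : (Fin (d+1) → ℝ) → ℝ}

/-- partial derivative of `H` in `p` equals full derivative applied to `(0,v)` -/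
lemma fderiv_H_apply (hH : ContDiff ℝ (⊤ : ℕ∞) (fun q : (Fin (d+1) → ℝ) × (Fin d → ℝ) => H q.1 q.2)) (z : Fin (d+1) → ℝ) (p v : Fin d → ℝ) :
    fderiv ℝ (H z) p v
      = fderiv ℝ (fun q : (Fin (d+1) → ℝ) × (Fin d → ℝ) => H q.1 q.2) (z, p) (0, v) := by
  have h1 : HasFDerivAt (fun q : Fin d → ℝ => ((z, q) : (Fin (d+1) → ℝ) × (Fin d → ℝ)))
      (ContinuousLinearMap.inr ℝ _ _) p := hasFDerivAt_prodMk_right z p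
  have h2 : HasFDerivAt (fun q : (Fin (d+1) → ℝ) × (Fin d → ℝ) => H q.1 q.2)
      (fderiv ℝ (fun q : (Fin (d+1) → ℝ) × (Fin d → ℝ) => H q.1 q.2) (z, p)) (z, p) :=
    (hH.differentiable (by simp) _).hasFDerivAt
  have h3 := h2.comp p h1
  have : fderiv ℝ (H z) p = ((fderiv ℝ (fun q : (Fin (d+1) → ℝ) × (Fin d → ℝ) => H q.1 q.2)
      (z, p)).comp (ContinuousLinearMap.inr ℝ _ _)) := h3.fderiv
  rw [this]
  simp

lemma gradsp_contDiff (hu : ContDiff ℝ (⊤ : ℕ∞) u) : ContDiff ℝ (⊤ : ℕ∞) (fun z => gradsp u z) := by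
  refine contDiff_pi.2 fun i => ?_
  exact (hu.fderiv_right (by simp)).clm_apply contDiff_const

lemma hpu_contDiff (hH : ContDiff ℝ (⊤ : ℕ∞) (fun q : (Fin (d+1) → ℝ) × (Fin d → ℝ) => H q.1 q.2)) (hu : ContDiff ℝ (⊤ : ℕ∞) u) (i : Fin d) : ContDiff ℝ (⊤ : ℕ∞) (fun z => Hpu H u z i) := by
  have heq : (fun z => Hpu H u z i) = fun z =>
      (fderiv ℝ (fun q : (Fin (d+1) → ℝ) × (Fin d → ℝ) => H q.1 q.2) (z, gradsp u z))
        ((0 : Fin (d+1) → ℝ), Pi.single i 1) := by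
    funext z; exact fderiv_H_apply hH z (gradsp u z) (Pi.single i 1)
  rw [heq]
  exact ((hH.fderiv_right (by simp)).comp (contDiff_id.prodMk (gradsp_contDiff hu))).clm_apply
    contDiff_const

lemma hpu_continuous (hH : ContDiff ℝ (⊤ : ℕ∞) (fun q : (Fin (d+1) → ℝ) × (Fin d → ℝ) => H q.1 q.2)) (hu : ContDiff ℝ (⊤ : ℕ∞) u) : Continuous (fun z => Hpu H u z) :=
  continuous_pi fun i => (hpu_contDiff hH hu i).continuous

lemma zper_pd {f : (Fin (d+1) → ℝ) → ℝ} (hf : Differentiable ℝ f)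
    (hper : Zper f) (j : Fin (d+1)) : Zper (pd j f) := by
  intro z c
  have hT : HasFDerivAt (fun w : Fin (d+1) → ℝ => w + fun i => ((c i : ℝ)))
      (ContinuousLinearMap.id ℝ (Fin (d+1) → ℝ)) z := (hasFDerivAt_id z).add_const _
  have hcomp : HasFDerivAt (fun w : Fin (d+1) → ℝ => f (w + fun i => ((c i : ℝ))))
      ((fderiv ℝ f (z + fun i => ((c i : ℝ)))).comp (ContinuousLinearMap.id ℝ _)) z :=
    (hf _).hasFDerivAt.comp z hT
  have heq : (fun w : Fin (d+1) → ℝ => f (w + fun i => ((c i : ℝ)))) = f := by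
    funext w; exact hper w c
  rw [heq] at hcomp
  show pd j f (z + fun i => ((c i : ℝ))) = pd j f z
  unfold pd
  rw [hcomp.fderiv]
  simp

lemma zper_gradsp (hu : ContDiff ℝ (⊤ : ℕ∞) u) (huper : Zper u) : ∀ (z : Fin (d+1) → ℝ) (c : Fin (d+1) → ℤ),
    gradsp u (z + fun i => (c i : ℝ)) = gradsp u z := by
  intro z c
  funext i
  exact zper_pd (hu.differentiable (by simp)) huper i.castSucc z c

lemma zper_hpu (hHper : ∀ z p (m : Fin (d+1) → ℤ), H (z + fun i => (m i : ℝ)) p = H z p) (hu : ContDiff ℝ (⊤ : ℕ∞) u) (huper : Zper u) (i : Fin d) : Zper (fun z => Hpu H u z i) := by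
  intro z c
  show fderiv ℝ (H (z + fun i => ((c i:ℝ)))) (gradsp u (z + fun i => ((c i:ℝ)))) _ = _
  rw [zper_gradsp hu huper z c]
  have : H (z + fun i => ((c i:ℝ))) = H z := funext fun p => hHper z p c
  rw [this]
  rfl

end Ham

section Leg
variable {d : ℕ} {H : (Fin (d+1) → ℝ) → (Fin d → ℝ) → ℝ}

/-- gradient inequality for the convex function `H z` -/
lemma grad_ineq (hH : ContDiff ℝ (⊤ : ℕ∞) (fun q : (Fin (d+1) → ℝ) × (Fin d → ℝ) => H q.1 q.2))
    (hHconv : ∀ z, StrictConvexOn ℝ Set.univ (H z)) (z : Fin (d+1) → ℝ) (p q : Fin d → ℝ) :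
    H z p + ∑ i, (q i - p i) * fderiv ℝ (H z) p (Pi.single i 1) ≤ H z q := by
  classical
  have hdiff : Differentiable ℝ (H z) := by
    have : (H z) = (fun q' : (Fin (d+1) → ℝ) × (Fin d → ℝ) => H q'.1 q'.2) ∘ (fun w => (z, w)) :=
      rfl
    rw [this]
    exact (hH.differentiable (by simp)).comp ((differentiable_const z).prodMk differentiable_id)
  set g : ℝ → ℝ := fun t => H z (t • (q - p) + p) with hg
  have hgconv : ConvexOn ℝ Set.univ g := by
    refine ⟨convex_univ, fun t1 _ t2 _ a b ha hb hab => ?_⟩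
    have key : (a • t1 + b • t2) • (q - p) + p
        = a • (t1 • (q - p) + p) + b • (t2 • (q - p) + p) := by
      have hb' : b = 1 - a := by linarith
      subst hb'
      simp only [smul_eq_mul]
      module
    simp only [hg, key]
    exact (hHconv z).convexOn.2 (Set.mem_univ _) (Set.mem_univ _) ha hb hab
  have hc : HasDerivAt (fun t : ℝ => t • (q - p) + p) (q - p) 0 := by
    simpa using ((hasDerivAt_id (0:ℝ)).smul_const (q - p)).add_const p
  have hgd : HasDerivAt g (fderiv ℝ (H z) p (q - p)) 0 := by
    have h0 : ((0:ℝ) • (q - p) + p) = p := by simp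
    have hF : HasFDerivAt (H z) (fderiv ℝ (H z) ((0:ℝ) • (q - p) + p)) ((0:ℝ) • (q - p) + p) := by
      rw [h0]; exact (hdiff p).hasFDerivAt
    have hcomp := hF.comp_hasDerivAt 0 hc
    rw [h0] at hcomp
    exact hcomp
  have hslope := hgconv.le_slope_of_hasDerivAt (Set.mem_univ 0) (Set.mem_univ 1)
    zero_lt_one hgd
  rw [slope_def_field] at hslope
  have hg0 : g 0 = H z p := by simp [hg]
  have hg1 : g 1 = H z q := by simp [hg]
  have hD : fderiv ℝ (H z) p (q - p) = ∑ i, (q i - p i) * fderiv ℝ (H z) p (Pi.single i 1) := by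
    rw [clm_apply_pi]
    rfl
  rw [hg0, hg1] at hslope
  rw [← hD]
  have : fderiv ℝ (H z) p (q - p) ≤ H z q - H z p := by
    simpa using hslope
  linarith

lemma legendre_bddAbove {d : ℕ} {H : (Fin (d+1) → ℝ) → (Fin d → ℝ) → ℝ}
    (hH : ContDiff ℝ (⊤ : ℕ∞) (fun q : (Fin (d+1) → ℝ) × (Fin d → ℝ) => H q.1 q.2))
    (hHsuper : ∀ C : ℝ, ∃ R : ℝ, ∀ z p, R ≤ ‖p‖ → C * ‖p‖ ≤ H z p)
    (z : Fin (d+1) → ℝ) (v : Fin d → ℝ) :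
    BddAbove {y : ℝ | ∃ p : Fin d → ℝ, y = (∑ i, p i * v i) - H z p} := by
  obtain ⟨R, hR⟩ := hHsuper (d * ‖v‖ + 1)
  set R' := max R 0 with hR'
  have hcont : ContinuousOn (H z) (Metric.closedBall (0 : Fin d → ℝ) R') := by
    have : Continuous (H z) := by
      have : (H z) = (fun q : (Fin (d+1) → ℝ) × (Fin d → ℝ) => H q.1 q.2) ∘ (fun w => (z, w)) :=
        rfl
      rw [this]
      exact (hH.continuous).comp (continuous_const.prodMk continuous_id)
    exact this.continuousOn
  obtain ⟨M, hM⟩ := (isCompact_closedBall (0 : Fin d → ℝ) R').exists_bound_of_continuousOn hcont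
  refine ⟨max 0 (d * ‖v‖ * R' + M), ?_⟩
  rintro y ⟨p, rfl⟩
  by_cases hp : ‖p‖ ≤ R'
  · have hmem : p ∈ Metric.closedBall (0 : Fin d → ℝ) R' := by
      simpa [Metric.mem_closedBall, dist_zero_right] using hp
    have h1 : (∑ i, p i * v i) ≤ d * ‖v‖ * R' := by
      calc (∑ i, p i * v i) ≤ |∑ i, p i * v i| := le_abs_self _
        _ ≤ d * ‖p‖ * ‖v‖ := abs_sum_mul_le p v
        _ ≤ d * ‖v‖ * R' := by
            have h0 : (0:ℝ) ≤ d * ‖v‖ := by positivity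
            calc (d:ℝ) * ‖p‖ * ‖v‖ = d * ‖v‖ * ‖p‖ := by ring
              _ ≤ d * ‖v‖ * R' := mul_le_mul_of_nonneg_left hp h0
    have h2 : -H z p ≤ M := by
      have := hM p hmem
      have := abs_le.1 (by rwa [Real.norm_eq_abs] at this)
      linarith [this.1]
    have : (∑ i, p i * v i) - H z p ≤ d * ‖v‖ * R' + M := by linarith
    exact le_max_of_le_right this
  · push_neg at hp
    have hRp : R ≤ ‖p‖ := le_trans (le_max_left R 0) hp.le
    have hHp := hR z p hRp
    have h1 : (∑ i, p i * v i) ≤ d * ‖v‖ * ‖p‖ := by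
      calc (∑ i, p i * v i) ≤ |∑ i, p i * v i| := le_abs_self _
        _ ≤ d * ‖p‖ * ‖v‖ := abs_sum_mul_le p v
        _ = d * ‖v‖ * ‖p‖ := by ring
    have hp0 : (0:ℝ) ≤ ‖p‖ := norm_nonneg _
    have : (∑ i, p i * v i) - H z p ≤ -‖p‖ := by nlinarith
    exact le_max_of_le_left (by linarith)

lemma legendre_isGreatest {d : ℕ} {H : (Fin (d+1) → ℝ) → (Fin d → ℝ) → ℝ}
    (hH : ContDiff ℝ (⊤ : ℕ∞) (fun q : (Fin (d+1) → ℝ) × (Fin d → ℝ) => H q.1 q.2))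
    (hHconv : ∀ z, StrictConvexOn ℝ Set.univ (H z)) (z : Fin (d+1) → ℝ) (p₀ : Fin d → ℝ) :
    IsGreatest {y : ℝ | ∃ p : Fin d → ℝ,
        y = (∑ i, p i * (fderiv ℝ (H z) p₀ (Pi.single i 1))) - H z p}
      ((∑ i, p₀ i * fderiv ℝ (H z) p₀ (Pi.single i 1)) - H z p₀) := by
  constructor
  · exact ⟨p₀, rfl⟩
  · rintro y ⟨p, rfl⟩
    have hgi := grad_ineq hH hHconv z p₀ p
    have hsum : ∑ i, (p i - p₀ i) * fderiv ℝ (H z) p₀ (Pi.single i 1)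
        = (∑ i, p i * fderiv ℝ (H z) p₀ (Pi.single i 1))
          - ∑ i, p₀ i * fderiv ℝ (H z) p₀ (Pi.single i 1) := by
      rw [← Finset.sum_sub_distrib]
      exact Finset.sum_congr rfl fun i _ => by ring
    rw [hsum] at hgi
    linarith

lemma core_integral {d : ℕ} {H : (Fin (d+1) → ℝ) → (Fin d → ℝ) → ℝ}
    {u m : (Fin (d+1) → ℝ) → ℝ}
    (hH : ContDiff ℝ (⊤ : ℕ∞) (fun q : (Fin (d+1) → ℝ) × (Fin d → ℝ) => H q.1 q.2))
    (hHper : ∀ z p (c : Fin (d+1) → ℤ), H (z + fun i => (c i : ℝ)) p = H z p)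
    (hu : ContDiff ℝ (⊤ : ℕ∞) u) (huper : Zper u)
    (hm : ContDiff ℝ (⊤ : ℕ∞) m) (hmper : Zper m)
    (hMFG2 : ∀ z, phit m z + ∑ i, pd i.castSucc (fun w => m w * Hpu H u w i) z = 0)
    {φ : (Fin (d+1) → ℝ) → ℝ} (hφ : ContDiff ℝ 1 φ) (hφper : Zper φ) :
    ∫ z in cube (d+1), (phit φ z + ∑ i, gradsp φ z i * Hpu H u z i) * m z = 0 := by
  classical
  set Gl : (Fin (d+1) → ℝ) → ℝ := fun z => φ z * m z with hGl
  set G : Fin d → (Fin (d+1) → ℝ) → ℝ := fun j z => φ z * (m z * Hpu H u z j) with hG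
  have hGlC : ContDiff ℝ 1 Gl := hφ.mul (hm.of_le (by simp))
  have hGC : ∀ j, ContDiff ℝ 1 (G j) := fun j =>
    hφ.mul ((hm.of_le (by simp)).mul ((hpu_contDiff hH hu j).of_le (by simp)))
  have hGlper : Zper Gl := hφper.mul hmper
  have hGper : ∀ j, Zper (G j) := fun j =>
    hφper.mul (hmper.mul (zper_hpu hHper hu huper j))
  have hpt : ∀ z, (phit φ z + ∑ i, gradsp φ z i * Hpu H u z i) * m z
      = pd (Fin.last d) Gl z + ∑ i, pd i.castSucc (G i) z := by
    intro z
    have dφ : DifferentiableAt ℝ φ z := (hφ.differentiable one_ne_zero) z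
    have dm : DifferentiableAt ℝ m z := (hm.differentiable (by simp)) z
    have dH : ∀ i, DifferentiableAt ℝ (fun w => m w * Hpu H u w i) z := fun i =>
      dm.mul (((hpu_contDiff hH hu i).differentiable (by simp)) z)
    have h1 : pd (Fin.last d) Gl z = phit φ z * m z + φ z * phit m z :=
      pd_mul dφ dm (Fin.last d)
    have h2 : ∀ i, pd i.castSucc (G i) z
        = gradsp φ z i * (m z * Hpu H u z i)
          + φ z * pd i.castSucc (fun w => m w * Hpu H u w i) z := fun i =>
      pd_mul dφ (dH i) i.castSucc
    have h3 := hMFG2 z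
    rw [h1, Finset.sum_congr rfl fun i _ => h2 i, Finset.sum_add_distrib,
      ← Finset.mul_sum]
    have h4 : φ z * ∑ i, pd i.castSucc (fun w => m w * Hpu H u w i) z
        = - (φ z * phit m z) := by
      have : ∑ i, pd i.castSucc (fun w => m w * Hpu H u w i) z = - phit m z := by
        linarith
      rw [this]; ring
    rw [h4]
    have h5 : (∑ i, gradsp φ z i * Hpu H u z i) * m z
        = ∑ i, gradsp φ z i * (m z * Hpu H u z i) := by
      rw [Finset.sum_mul]
      exact Finset.sum_congr rfl fun i _ => by ring
    rw [add_mul, h5]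
    ring
  have heq : (fun z => (phit φ z + ∑ i, gradsp φ z i * Hpu H u z i) * m z)
      = fun z => pd (Fin.last d) Gl z + ∑ i, pd i.castSucc (G i) z := funext hpt
  rw [heq]
  have hint1 : IntegrableOn (pd (Fin.last d) Gl) (cube (d+1)) :=
    (pd_continuous hGlC _).continuousOn.integrableOn_compact isCompact_Icc
  have hint2 : ∀ i : Fin d, IntegrableOn (fun z => pd i.castSucc (G i) z) (cube (d+1)) :=
    fun i => (pd_continuous (hGC i) _).continuousOn.integrableOn_compact isCompact_Icc
  rw [integral_add hint1 (integrable_finset_sum _ fun i _ => hint2 i)]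
  rw [integral_finset_sum _ fun i _ => hint2 i]
  rw [integral_pd hGlC hGlper (Fin.last d)]
  rw [Finset.sum_congr rfl fun i _ => integral_pd (hGC i) (hGper i) i.castSucc]
  simp

end Leg


/-- If `(u_k, m_k)` solves the mean field game system
`u_t + H(z,∇u) = (1/k)log m + H̄_k`, `m_t + div(H_p m) = 0`, `∫u = 0`,
`∫m = 1`, then `μ_k = δ(v - H_p(z,∇u_k)) m_k` lies in `𝒞` and minimizes
`A_{L,k}` over `𝒞`, with `A_{L,k}(μ_k) = -(1/k) log I_k[u_k] = -H̄_k`. -/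
theorem stmt_15 (d k : ℕ) (hk : 0 < k)
    (H : (Fin (d+1) → ℝ) → (Fin d → ℝ) → ℝ)
    (hH : ContDiff ℝ (⊤ : ℕ∞) (fun q : (Fin (d+1) → ℝ) × (Fin d → ℝ) => H q.1 q.2))
    (hHper : ∀ z p (m : Fin (d+1) → ℤ), H (z + fun i => (m i : ℝ)) p = H z p)
    (hHconv : ∀ z, StrictConvexOn ℝ Set.univ (H z))
    (hHsuper : ∀ C : ℝ, ∃ R : ℝ, ∀ z p, R ≤ ‖p‖ → C * ‖p‖ ≤ H z p)
    (L : (Fin (d+1) → ℝ) → (Fin d → ℝ) → ℝ)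
    (hL : ∀ z v, L z v = sSup {y : ℝ | ∃ p : Fin d → ℝ,
      y = (∑ i, p i * v i) - H z p})
    (u m : (Fin (d+1) → ℝ) → ℝ) (Hbark : ℝ)
    (hu : ContDiff ℝ (⊤ : ℕ∞) u) (huper : Zper u)
    (hm : ContDiff ℝ (⊤ : ℕ∞) m) (hmper : Zper m) (hmpos : ∀ z, 0 < m z)
    (hMFG1 : ∀ z, phit u z + H z (gradsp u z) =
      (k : ℝ)⁻¹ * Real.log (m z) + Hbark)
    (hMFG2 : ∀ z, phit m z
      + ∑ i, pd i.castSucc (fun w => m w * Hpu H u w i) z = 0)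
    (hu0 : (∫ z in cube (d+1), u z) = 0)
    (hm1 : (∫ z in cube (d+1), m z) = 1) :
    memC L (muk H u m) (fun z => m z) ∧
    (∫ z in cube (d+1),
        (L z (Hpu H u z) + (k : ℝ)⁻¹ * Real.log (m z)) * m z) =
      -((k : ℝ)⁻¹ * Real.log (∫ z in cube (d+1),
          Real.exp ((k : ℝ) * (phit u z + H z (gradsp u z))))) ∧
    (∫ z in cube (d+1),
        (L z (Hpu H u z) + (k : ℝ)⁻¹ * Real.log (m z)) * m z) = -Hbark ∧
    ∀ (ν : Measure ((Fin (d+1) → ℝ) × (Fin d → ℝ)))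
      (ρ : (Fin (d+1) → ℝ) → ℝ), memC L ν ρ →
      (∫ z in cube (d+1),
          (L z (Hpu H u z) + (k : ℝ)⁻¹ * Real.log (m z)) * m z) ≤
        (∫ zv : (Fin (d+1) → ℝ) × (Fin d → ℝ), L zv.1 zv.2 ∂ν)
          + (k : ℝ)⁻¹ * ∫ z in cube (d+1), ρ z * Real.log (ρ z) := by
  classical
  have hk0 : (k:ℝ) ≠ 0 := (Nat.cast_pos.2 hk).ne'
  have hkinv : (0:ℝ) ≤ (k:ℝ)⁻¹ := by positivity
  have hmc : Continuous m := hm.continuous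
  have hcube : MeasurableSet (cube (d+1)) := measurableSet_Icc
  have hTc : Continuous (fun z => ((z, Hpu H u z) : (Fin (d+1) → ℝ) × (Fin d → ℝ))) :=
    continuous_id.prodMk (hpu_continuous hH hu)
  set σ : Measure (Fin (d+1) → ℝ) :=
    ((volume.restrict (cube (d+1))).withDensity fun z => ENNReal.ofReal (m z)) with hσdef
  have hmukmap : muk H u m = σ.map (fun z => (z, Hpu H u z)) := rfl
  have hIntm : IntegrableOn m (cube (d+1)) :=
    hmc.continuousOn.integrableOn_compact isCompact_Icc
  -- total mass
  have hσuniv : σ Set.univ = 1 := by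
    rw [hσdef, withDensity_apply _ MeasurableSet.univ, Measure.restrict_univ]
    rw [← ofReal_integral_eq_lintegral_ofReal hIntm
        (Filter.Eventually.of_forall fun z => (hmpos z).le)]
    rw [hm1]
    simp
  have hprob : IsProbabilityMeasure (muk H u m) := by
    constructor
    rw [hmukmap, Measure.map_apply hTc.measurable MeasurableSet.univ]
    simpa using hσuniv
  -- transfer of integrals
  have trans_int : ∀ F : (Fin (d+1) → ℝ) × (Fin d → ℝ) → ℝ, Continuous F →
      Integrable F (muk H u m) ∧
      (∫ zv, F zv ∂(muk H u m)) = ∫ z in cube (d+1), F (z, Hpu H u z) * m z := by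
    intro F hF
    have hnn : Measurable fun z => (m z).toNNReal :=
      (continuous_real_toNNReal.comp hmc).measurable
    have hcoe : (fun z => ENNReal.ofReal (m z))
        = fun z => (((fun w => (m w).toNNReal) z : NNReal) : ENNReal) := rfl
    have hcont2 : Continuous fun z => (((m z).toNNReal : ℝ)) • F (z, Hpu H u z) := by
      have h1 : Continuous fun z => (((m z).toNNReal : ℝ)) := by
        simp only [Real.coe_toNNReal']
        exact hmc.max continuous_const
      exact h1.smul (hF.comp hTc)
    have hIntOn : Integrable (fun z => (((m z).toNNReal : ℝ)) • F (z, Hpu H u z))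
        (volume.restrict (cube (d+1))) :=
      hcont2.continuousOn.integrableOn_compact isCompact_Icc
    have hInt : Integrable F (muk H u m) := by
      rw [hmukmap]
      rw [integrable_map_measure hF.aestronglyMeasurable hTc.measurable.aemeasurable]
      rw [hσdef, hcoe, integrable_withDensity_iff_integrable_coe_smul hnn]
      exact hIntOn
    refine ⟨hInt, ?_⟩
    rw [hmukmap, integral_map hTc.measurable.aemeasurable hF.aestronglyMeasurable]
    rw [hσdef, hcoe, integral_withDensity_eq_integral_smul hnn]
    refine setIntegral_congr_fun hcube fun z _ => ?_
    rw [NNReal.smul_def, Real.coe_toNNReal _ (hmpos z).le]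
    simp [mul_comm]
  -- continuity of basic pieces
  have hHzc : Continuous fun z => H z (gradsp u z) := by
    have : (fun z => H z (gradsp u z))
        = (fun q : (Fin (d+1) → ℝ) × (Fin d → ℝ) => H q.1 q.2)
          ∘ (fun z => (z, gradsp u z)) := rfl
    rw [this]
    exact hH.continuous.comp (continuous_id.prodMk (gradsp_contDiff hu).continuous)
  have hphitu : Continuous (phit u) := pd_continuous (hu.of_le (by simp)) _
  have hgradspu : Continuous fun z => gradsp u z := (gradsp_contDiff hu).continuous
  -- the Legendre pointwise identity
  have hLeg : ∀ z, L z (Hpu H u z)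
      = (∑ i, gradsp u z i * Hpu H u z i) - H z (gradsp u z) := by
    intro z
    rw [hL]
    exact (legendre_isGreatest hH hHconv z (gradsp u z)).csSup_eq
  -- the core integral with φ = u
  have hcoreu : ∫ z in cube (d+1),
      (phit u z + ∑ i, gradsp u z i * Hpu H u z i) * m z = 0 :=
    core_integral hH hHper hu huper hm hmper hMFG2 (hu.of_le (by simp)) huper
  -- value of the integral
  have hsumc : Continuous fun z => ∑ i, gradsp u z i * Hpu H u z i := by
    refine continuous_finset_sum _ fun i _ => ?_
    exact ((continuous_apply i).comp hgradspu).mul (hpu_contDiff hH hu i).continuous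
  have hVal : (∫ z in cube (d+1),
      (L z (Hpu H u z) + (k : ℝ)⁻¹ * Real.log (m z)) * m z) = -Hbark := by
    have hpt : ∀ z, (L z (Hpu H u z) + (k : ℝ)⁻¹ * Real.log (m z)) * m z
        = (phit u z + ∑ i, gradsp u z i * Hpu H u z i) * m z - Hbark * m z := by
      intro z
      have h1 := hMFG1 z
      have h2 := hLeg z
      have h3 : (k : ℝ)⁻¹ * Real.log (m z) = phit u z + H z (gradsp u z) - Hbark := by
        linarith
      rw [h2, h3]
      ring
    rw [setIntegral_congr_fun hcube fun z _ => hpt z]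
    have hA : IntegrableOn (fun z => (phit u z + ∑ i, gradsp u z i * Hpu H u z i) * m z)
        (cube (d+1)) :=
      ((hphitu.add hsumc).mul hmc).continuousOn.integrableOn_compact isCompact_Icc
    have hB : IntegrableOn (fun z => Hbark * m z) (cube (d+1)) := hIntm.const_mul _
    rw [integral_sub hA hB, hcoreu, MeasureTheory.integral_const_mul, hm1]
    ring
  -- the exponential integral
  have hExp : (∫ z in cube (d+1),
      Real.exp ((k : ℝ) * (phit u z + H z (gradsp u z)))) = Real.exp ((k:ℝ) * Hbark) := by
    have hpt : ∀ z, Real.exp ((k : ℝ) * (phit u z + H z (gradsp u z)))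
        = m z * Real.exp ((k:ℝ) * Hbark) := by
      intro z
      rw [hMFG1 z, mul_add, ← mul_assoc, mul_inv_cancel₀ hk0, one_mul, Real.exp_add,
        Real.exp_log (hmpos z)]
    rw [setIntegral_congr_fun hcube fun z _ => hpt z, integral_mul_const, hm1, one_mul]
  -- membership of μ_k in 𝒞
  have hmemC : memC L (muk H u m) (fun z => m z) := by
    refine ⟨hprob, ?_, ?_, ?_, fun z => (hmpos z).le, ?_, ?_, ?_⟩
    · -- concentration
      rw [hmukmap, Measure.map_apply hTc.measurable
        ((hcube.prod MeasurableSet.univ).compl)]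
      have hpre : (fun z => ((z, Hpu H u z) : (Fin (d+1) → ℝ) × (Fin d → ℝ)))
          ⁻¹' ((cube (d+1) ×ˢ (Set.univ : Set (Fin d → ℝ)))ᶜ) = (cube (d+1))ᶜ := by
        ext z; simp [Set.mem_prod]
      rw [hpre, hσdef, withDensity_apply _ hcube.compl,
        Measure.restrict_restrict hcube.compl]
      simp
    · exact (trans_int _ (continuous_norm.comp continuous_snd)).1
    · intro φ hφ hφper
      have hFc : Continuous fun zv : (Fin (d+1) → ℝ) × (Fin d → ℝ) =>
          phit φ zv.1 + ∑ i, gradsp φ zv.1 i * zv.2 i := by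
        refine ((pd_continuous hφ _).comp continuous_fst).add ?_
        refine continuous_finset_sum _ fun i _ => ?_
        exact ((pd_continuous hφ i.castSucc).comp continuous_fst).mul
          ((continuous_apply i).comp continuous_snd)
      rw [(trans_int _ hFc).2]
      exact core_integral hH hHper hu huper hm hmper hMFG2 hφ hφper
    · intro g hg
      exact (trans_int _ (hg.comp continuous_fst)).2
    · -- integrability of L
      set c : (Fin (d+1) → ℝ) × (Fin d → ℝ) → ℝ := fun zv =>
        (∑ i, gradsp u zv.1 i * zv.2 i) - H zv.1 (gradsp u zv.1) with hcdef
      have hcc : Continuous c := by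
        refine Continuous.sub ?_ (hHzc.comp continuous_fst)
        refine continuous_finset_sum _ fun i _ => ?_
        exact (((continuous_apply i).comp hgradspu).comp continuous_fst).mul
          ((continuous_apply i).comp continuous_snd)
      have hIc : Integrable c (muk H u m) := (trans_int _ hcc).1
      have hgraph : (muk H u m) {zv : (Fin (d+1) → ℝ) × (Fin d → ℝ) |
          ¬ zv.2 = Hpu H u zv.1} = 0 := by
        have hcl : MeasurableSet {zv : (Fin (d+1) → ℝ) × (Fin d → ℝ) |
            zv.2 = Hpu H u zv.1} :=
          (isClosed_eq continuous_snd ((hpu_continuous hH hu).comp continuous_fst))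
            |>.measurableSet
        have hseteq : {zv : (Fin (d+1) → ℝ) × (Fin d → ℝ) | ¬ zv.2 = Hpu H u zv.1}
            = {zv : (Fin (d+1) → ℝ) × (Fin d → ℝ) | zv.2 = Hpu H u zv.1}ᶜ := rfl
        rw [hseteq, hmukmap, Measure.map_apply hTc.measurable hcl.compl]
        have : (fun z => ((z, Hpu H u z) : (Fin (d+1) → ℝ) × (Fin d → ℝ)))
            ⁻¹' {zv : (Fin (d+1) → ℝ) × (Fin d → ℝ) | zv.2 = Hpu H u zv.1}ᶜ = ∅ := by
          ext z; simp
        rw [this]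
        exact measure_empty
      have hae : (fun zv : (Fin (d+1) → ℝ) × (Fin d → ℝ) => L zv.1 zv.2)
          =ᵐ[muk H u m] c := by
        have : ∀ᵐ zv ∂(muk H u m), zv.2 = Hpu H u zv.1 := by
          rw [MeasureTheory.ae_iff]
          exact hgraph
        filter_upwards [this] with zv hzv
        simp only [hcdef]
        rw [hzv, hLeg zv.1]
      exact hIc.congr hae.symm
    · exact ((hmc.mul (hmc.log fun z => (hmpos z).ne')).continuousOn).integrableOn_compact
        isCompact_Icc
  refine ⟨hmemC, ?_, hVal, ?_⟩
  · rw [hVal, hExp, Real.log_exp, ← mul_assoc, inv_mul_cancel₀ hk0, one_mul]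
  -- minimality
  intro ν ρ hmem
  obtain ⟨hprobν, hconc, hIntv, hconstr, hρ0, hmarg, hLint, hent⟩ := hmem
  haveI := hprobν
  rw [hVal]
  -- a.e. concentration on the cube
  have haecube : ∀ᵐ zv ∂ν, zv.1 ∈ cube (d+1) := by
    rw [MeasureTheory.ae_iff]
    have : {zv : (Fin (d+1) → ℝ) × (Fin d → ℝ) | ¬ zv.1 ∈ cube (d+1)}
        = (cube (d+1) ×ˢ (Set.univ : Set (Fin d → ℝ)))ᶜ := by
      ext zv; simp [Set.mem_prod]
    rw [this]
    exact hconc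
  -- ∫ρ = 1 and integrability of ρ
  have hρ1 : (∫ z in cube (d+1), ρ z) = 1 := by
    have h1 := hmarg (fun _ => (1:ℝ)) continuous_const
    simp only [one_mul] at h1
    rw [← h1]
    simp
  have hρint : IntegrableOn ρ (cube (d+1)) := by
    by_contra hcon
    rw [MeasureTheory.integral_undef hcon] at hρ1
    norm_num at hρ1
  -- bounds on the cube
  obtain ⟨Cu, hCu⟩ := isCompact_Icc.exists_bound_of_continuousOn
    (f := fun z => gradsp u z) hgradspu.continuousOn
  set g : (Fin (d+1) → ℝ) → ℝ := fun z => phit u z + H z (gradsp u z) with hgdef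
  have hgc : Continuous g := hphitu.add hHzc
  obtain ⟨Cg, hCg⟩ := isCompact_Icc.exists_bound_of_continuousOn
    (f := g) hgc.continuousOn
  obtain ⟨Cp, hCp⟩ := isCompact_Icc.exists_bound_of_continuousOn
    (f := phit u) hphitu.continuousOn
  -- integrable pieces over ν
  set c1 : (Fin (d+1) → ℝ) × (Fin d → ℝ) → ℝ := fun zv =>
    phit u zv.1 + ∑ i, gradsp u zv.1 i * zv.2 i with hc1def
  have hc1c : Continuous c1 := by
    refine (hphitu.comp continuous_fst).add ?_
    refine continuous_finset_sum _ fun i _ => ?_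
    exact (((continuous_apply i).comp hgradspu).comp continuous_fst).mul
      ((continuous_apply i).comp continuous_snd)
  have hIc1 : Integrable c1 ν := by
    refine Integrable.mono' ((integrable_const Cp).add (hIntv.const_mul (d * Cu)))
      hc1c.aestronglyMeasurable ?_
    filter_upwards [haecube] with zv hzv
    have h1 : |phit u zv.1| ≤ Cp := by
      have := hCp zv.1 hzv; rwa [Real.norm_eq_abs] at this
    have h2 : |∑ i, gradsp u zv.1 i * zv.2 i| ≤ d * Cu * ‖zv.2‖ := by
      refine le_trans (abs_sum_mul_le _ _) ?_
      have h3 : ‖gradsp u zv.1‖ ≤ Cu := hCu zv.1 hzv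
      have h4 : (0:ℝ) ≤ ‖zv.2‖ := norm_nonneg _
      exact mul_le_mul_of_nonneg_right
        (mul_le_mul_of_nonneg_left h3 (Nat.cast_nonneg d)) h4
    calc ‖c1 zv‖ ≤ |phit u zv.1| + |∑ i, gradsp u zv.1 i * zv.2 i| := abs_add_le _ _
      _ ≤ Cp + d * Cu * ‖zv.2‖ := add_le_add h1 h2
  have hIg : Integrable (fun zv : (Fin (d+1) → ℝ) × (Fin d → ℝ) => g zv.1) ν := by
    refine Integrable.mono' (integrable_const Cg)
      ((hgc.comp continuous_fst).aestronglyMeasurable) ?_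
    filter_upwards [haecube] with zv hzv
    exact hCg zv.1 hzv
  -- pointwise lower bound on L
  have hLlower : ∀ zv : (Fin (d+1) → ℝ) × (Fin d → ℝ),
      c1 zv - g zv.1 ≤ L zv.1 zv.2 := by
    intro zv
    rw [hL]
    have hmem2 : ((∑ i, gradsp u zv.1 i * zv.2 i) - H zv.1 (gradsp u zv.1))
        ∈ {y : ℝ | ∃ p : Fin d → ℝ, y = (∑ i, p i * zv.2 i) - H zv.1 p} :=
      ⟨gradsp u zv.1, rfl⟩
    have hle := le_csSup (legendre_bddAbove hH hHsuper zv.1 zv.2) hmem2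
    have : c1 zv - g zv.1
        = (∑ i, gradsp u zv.1 i * zv.2 i) - H zv.1 (gradsp u zv.1) := by
      simp only [hc1def, hgdef]; ring
    rw [this]
    exact hle
  have hIc : Integrable (fun zv : (Fin (d+1) → ℝ) × (Fin d → ℝ) => c1 zv - g zv.1) ν :=
    hIc1.sub hIg
  have hstep1 : (∫ zv, (c1 zv - g zv.1) ∂ν) ≤ ∫ zv, L zv.1 zv.2 ∂ν :=
    integral_mono hIc hLint (fun zv => hLlower zv)
  have hc1zero : (∫ zv, c1 zv ∂ν) = 0 := hconstr u (hu.of_le (by simp)) huper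
  have hgρ : (∫ zv, g zv.1 ∂ν) = ∫ z in cube (d+1), g z * ρ z := hmarg g hgc
  -- integrability of ρ·log m etc.
  obtain ⟨Cl, hCl⟩ := (isCompact_Icc : IsCompact (cube (d+1))).exists_bound_of_continuousOn
    (f := fun z => Real.log (m z)) (hmc.log fun z => (hmpos z).ne').continuousOn
  have hIρlogm : IntegrableOn (fun z => Real.log (m z) * ρ z) (cube (d+1)) := by
    refine Integrable.bdd_mul (c := Cl) hρint
      ((hmc.log fun z => (hmpos z).ne').aestronglyMeasurable) ?_
    filter_upwards [ae_restrict_mem hcube] with z hz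
    exact hCl z hz
  have hgρ2 : (∫ z in cube (d+1), g z * ρ z)
      = (k : ℝ)⁻¹ * (∫ z in cube (d+1), Real.log (m z) * ρ z) + Hbark := by
    have hpt : ∀ z, g z * ρ z
        = (k : ℝ)⁻¹ * (Real.log (m z) * ρ z) + Hbark * ρ z := by
      intro z
      have := hMFG1 z
      simp only [hgdef]
      rw [this]
      ring
    rw [setIntegral_congr_fun hcube fun z _ => hpt z]
    rw [integral_add ((hIρlogm.const_mul _)) (hρint.const_mul _)]
    rw [MeasureTheory.integral_const_mul, MeasureTheory.integral_const_mul, hρ1, mul_one]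
  -- entropy inequality
  have hentropy : (∫ z in cube (d+1), Real.log (m z) * ρ z)
      ≤ ∫ z in cube (d+1), ρ z * Real.log (ρ z) := by
    have hpt : ∀ z ∈ cube (d+1), 0 ≤ ρ z * Real.log (ρ z)
        - Real.log (m z) * ρ z - (ρ z - m z) := by
      intro z _
      rcases (hρ0 z).eq_or_lt' with h0 | hpos
      · have hr : (0:ℝ) * Real.log 0 - Real.log (m z) * 0 - (0 - m z) = m z := by ring
        rw [h0, hr]
        exact (hmpos z).le
      · have hlog : Real.log (m z) - Real.log (ρ z) ≤ m z / ρ z - 1 := by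
          have := Real.log_le_sub_one_of_pos (div_pos (hmpos z) hpos)
          rwa [Real.log_div (hmpos z).ne' hpos.ne'] at this
        have hmul := mul_le_mul_of_nonneg_right hlog hpos.le
        rw [sub_mul, sub_mul, div_mul_cancel₀ _ hpos.ne', one_mul] at hmul
        nlinarith
    have hintall : IntegrableOn (fun z => ρ z * Real.log (ρ z)
        - Real.log (m z) * ρ z - (ρ z - m z)) (cube (d+1)) :=
      (hent.sub hIρlogm).sub (hρint.sub hIntm)
    have hnn : (0:ℝ) ≤ ∫ z in cube (d+1),
        (ρ z * Real.log (ρ z) - Real.log (m z) * ρ z - (ρ z - m z)) :=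
      setIntegral_nonneg hcube hpt
    have I1 : Integrable (fun z => ρ z * Real.log (ρ z) - Real.log (m z) * ρ z)
        (volume.restrict (cube (d+1))) := hent.sub hIρlogm
    have I2 : Integrable (fun z => ρ z - m z)
        (volume.restrict (cube (d+1))) := hρint.sub hIntm
    rw [integral_sub I1 I2, integral_sub hent hIρlogm, integral_sub hρint hIntm,
      hρ1, hm1] at hnn
    linarith
  -- put everything together
  have hLlow : -((k : ℝ)⁻¹ * (∫ z in cube (d+1), Real.log (m z) * ρ z) + Hbark)
      ≤ ∫ zv, L zv.1 zv.2 ∂ν := by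
    have := hstep1
    rw [integral_sub hIc1 hIg, hc1zero, hgρ, hgρ2] at this
    linarith
  have hfin : (k : ℝ)⁻¹ * (∫ z in cube (d+1), Real.log (m z) * ρ z)
      ≤ (k : ℝ)⁻¹ * ∫ z in cube (d+1), ρ z * Real.log (ρ z) :=
    mul_le_mul_of_nonneg_left hentropy hkinv
  linarith
end
end
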